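/- arXiv:1101.4178 — 2 statements merged into one kernel-verified Lean document; each statement's English description precedes it below -/
import Mathlib

section
/- Let {Λ_i}_{i∈ℕ} be a countable system of closed cones in ℝⁿ satisfying the normal qualification condition: [Σ_{i=1}^∞ x*_i = 0 with x*_i ∈ N(0;Λ_i)] implies x*_i = 0 for all i. Then for every Fréchet normal x* ∈ N̂(0; ⋂_{i=1}^∞ Λ_i) and every ε > 0 there exist x*_i ∈ N(0;Λ_i), i ∈ ℕ, with x* ∈ Σ_{i=1}^∞ 2^{-i} x*_i + ε𝔹*. -/
open Filter Topology

variable {E : Type*} [NormedAddCommGroup E] [InnerProductSpace ℝ E]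

/-- `Λ` is a cone: closed under multiplication by nonnegative scalars. -/
def IsConeSet (Λ : Set E) : Prop := ∀ t : ℝ, 0 ≤ t → ∀ v ∈ Λ, t • v ∈ Λ

/-- The translate `S - a = {x | x + a ∈ S}`. -/
def Set.translate (S : Set E) (a : E) : Set E := {x | x + a ∈ S}

/-- `v` is a Fréchet `ε`-normal to `Ω` at `x₀` (normals identified with vectors
via the inner product). -/
def IsEpsNormal (ε : ℝ) (v : E) (Ω : Set E) (x₀ : E) : Prop :=
  ∀ η > 0, ∃ δ > 0, ∀ x ∈ Ω, ‖x - x₀‖ < δ → (inner ℝ v (x - x₀) : ℝ) ≤ (ε + η) * ‖x - x₀‖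

/-- The Fréchet (regular) normal cone to `Ω` at `x₀`. -/
def frechetNormalCone (Ω : Set E) (x₀ : E) : Set E := {v | IsEpsNormal 0 v Ω x₀}

/-- The Mordukhovich limiting normal cone to `Ω` at `x₀`: limits of Fréchet
`ε_k`-normals at points `x_k → x₀` of `Ω` with `ε_k ↓ 0`. -/
def limitingNormalCone (Ω : Set E) (x₀ : E) : Set E :=
  {v | ∃ (ε : ℕ → ℝ) (x : ℕ → E) (w : ℕ → E),
    (∀ k, 0 ≤ ε k) ∧ Tendsto ε atTop (𝓝 0) ∧
    (∀ k, x k ∈ Ω) ∧ Tendsto x atTop (𝓝 x₀) ∧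
    Tendsto w atTop (𝓝 v) ∧ (∀ k, IsEpsNormal (ε k) (w k) Ω (x k))}

/-- The normal qualification condition for a countable system of cones. -/
def NormalQualification (n : ℕ) (Λ : ℕ → Set (EuclideanSpace ℝ (Fin n))) : Prop :=
  ∀ x : ℕ → EuclideanSpace ℝ (Fin n),
    (∀ i, x i ∈ limitingNormalCone (Λ i) 0) → HasSum x 0 → ∀ i, x i = 0

/-!
Penalization. Minimize `‖z‖² - ⟪v, z⟫ + k ∑_{i<k} wᵢ d(z, Λᵢ)²` over the whole space. The
minimizers `x_k` are bounded, and every cluster point `y` lies in each `Λᵢ` and satisfies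
`‖y‖² ≤ ⟪v, y⟫ ≤ 0`, because a Fréchet normal to a cone at `0` lies in its polar; so `x_k → 0`.
At a fixed minimizer `X`, replacing `d(·, Λᵢ)` by the distance to a nearest point `pᵢ` gives a
quadratic majorant touching the penalty at `X`; its vanishing gradient reads
`v = 2X + ∑_{i<k} wᵢ (2k (X - pᵢ))`. Each `2k (X - pᵢ)` is a proximal, hence Fréchet, normal to
`Λᵢ` at `pᵢ`, and since `Λᵢ` is a cone it is a limiting normal at `0`.
-/

open scoped RealInnerProductSpace

theorem eq_zero_of_forall_inner_add_mul_norm_sq_nonneg {g : E} {a : ℝ}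
    (h : ∀ u, 0 ≤ ⟪g, u⟫ + a * ‖u‖ ^ 2) : g = 0 := by
  set t := 1 / (|a| + 1)
  have ht : 0 < t := by positivity
  have hat : a * t < 1 := by
    rw [mul_one_div, div_lt_one (by positivity)]
    linarith [le_abs_self a]
  have h' := h (-(t • g))
  rw [inner_neg_right, real_inner_smul_right, real_inner_self_eq_norm_sq, norm_neg, norm_smul,
    Real.norm_of_nonneg ht.le] at h'
  have hg : ‖g‖ ^ 2 * (t * (1 - a * t)) ≤ 0 := by nlinarith
  have hg' : ‖g‖ ^ 2 ≤ 0 := nonpos_of_mul_nonpos_left hg (mul_pos ht (by linarith))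
  exact norm_eq_zero.1 (pow_eq_zero_iff two_ne_zero |>.1 (le_antisymm hg' (sq_nonneg _)))

theorem norm_add_sub_sq_real (x u p : E) :
    ‖x + u - p‖ ^ 2 = ‖x - p‖ ^ 2 + 2 * ⟪x - p, u⟫ + ‖u‖ ^ 2 := by
  rw [add_sub_right_comm, norm_add_sq_real]

theorem IsConeSet.iInter {ι : Sort*} {Λ : ι → Set E} (hΛ : ∀ i, IsConeSet (Λ i)) :
    IsConeSet (⋂ i, Λ i) := fun t ht z hz =>
  Set.mem_iInter.2 fun i => hΛ i t ht z (Set.mem_iInter.1 hz i)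

theorem IsConeSet.inner_nonpos_of_mem_frechetNormalCone {Ω : Set E} {v z : E}
    (hΩ : IsConeSet Ω) (hv : v ∈ frechetNormalCone Ω 0) (hz : z ∈ Ω) : ⟪v, z⟫ ≤ 0 := by
  have hsmall : ∀ η > 0, ⟪v, z⟫ ≤ η * ‖z‖ := by
    intro η hη
    obtain ⟨δ, hδ, hnormal⟩ := hv η hη
    set t := δ / (2 * (‖z‖ + 1))
    have ht : 0 < t := by positivity
    have htz : ‖t • z‖ = t * ‖z‖ := by rw [norm_smul, Real.norm_of_nonneg ht.le]
    have hclose : ‖t • z - 0‖ < δ := by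
      rw [sub_zero, htz]
      calc t * ‖z‖ < t * (2 * (‖z‖ + 1)) := by gcongr; linarith [norm_nonneg z]
        _ = δ := div_mul_cancel₀ _ (by positivity)
    have h := hnormal (t • z) (hΩ t ht.le z hz) hclose
    rw [sub_zero, real_inner_smul_right, htz, zero_add] at h
    nlinarith
  by_contra! hpos
  have h := hsmall (⟪v, z⟫ / (2 * (‖z‖ + 1))) (by positivity)
  rw [div_mul_eq_mul_div, le_div_iff₀ (by positivity)] at h
  nlinarith [norm_nonneg z]

theorem mem_frechetNormalCone_smul_sub_of_forall_dist_le {Λ : Set E} {x p : E}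
    (hp : ∀ z ∈ Λ, dist x p ≤ dist x z) {t : ℝ} (ht : 0 ≤ t) :
    t • (x - p) ∈ frechetNormalCone Λ p := by
  intro η hη
  refine ⟨2 * η / (t + 1), by positivity, fun z hz hzp => ?_⟩
  have hineq : 2 * ⟪x - p, z - p⟫ ≤ ‖z - p‖ ^ 2 := by
    have hdist := hp z hz
    rw [dist_eq_norm, dist_eq_norm, ← sub_sub_sub_cancel_right x z p] at hdist
    have hsq := pow_le_pow_left₀ (norm_nonneg _) hdist 2
    rw [norm_sub_sq_real (x - p) (z - p)] at hsq
    linarith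
  have hsmall : t * ‖z - p‖ ≤ 2 * η := by
    rw [lt_div_iff₀ (by positivity)] at hzp
    nlinarith [norm_nonneg (z - p)]
  rw [real_inner_smul_left, zero_add]
  nlinarith [norm_nonneg (z - p)]

theorem IsConeSet.mem_frechetNormalCone_smul {Λ : Set E} (hΛ : IsConeSet Λ) {y p : E}
    (hy : y ∈ frechetNormalCone Λ p) {t : ℝ} (ht : 0 < t) :
    y ∈ frechetNormalCone Λ (t • p) := by
  intro η hη
  obtain ⟨δ, hδ, hnormal⟩ := hy η hη
  refine ⟨t * δ, by positivity, fun z hz hzp => ?_⟩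
  have hscale : z - t • p = t • (t⁻¹ • z - p) := by
    rw [smul_sub, smul_inv_smul₀ ht.ne']
  have hnorm : ‖z - t • p‖ = t * ‖t⁻¹ • z - p‖ := by
    rw [hscale, norm_smul, Real.norm_of_nonneg ht.le]
  have h := hnormal (t⁻¹ • z) (hΛ _ (inv_nonneg.2 ht.le) z hz)
    (by rw [hnorm] at hzp; exact lt_of_mul_lt_mul_left hzp ht.le)
  rw [hscale, real_inner_smul_right, norm_smul, Real.norm_of_nonneg ht.le]
  nlinarith

theorem IsConeSet.mem_limitingNormalCone_zero {Λ : Set E} (hΛ : IsConeSet Λ) {y p : E}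
    (hp : p ∈ Λ) (hy : y ∈ frechetNormalCone Λ p) : y ∈ limitingNormalCone Λ 0 := by
  have hbase : Tendsto (fun m : ℕ => (1 / (m + 1) : ℝ) • p) atTop (𝓝 0) := by
    simpa using (tendsto_one_div_add_atTop_nhds_zero_nat (𝕜 := ℝ)).smul_const p
  exact ⟨fun _ => 0, fun m => (1 / (m + 1) : ℝ) • p, fun _ => y, fun _ => le_rfl,
    tendsto_const_nhds, fun m => hΛ _ (by positivity) p hp, hbase, tendsto_const_nhds,
    fun m => hΛ.mem_frechetNormalCone_smul hy (by positivity)⟩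

open Finset Metric

noncomputable def intersectionPenalty (Λ : ℕ → Set E) (w : ℕ → ℝ) (v : E) (k : ℕ) (z : E) : ℝ :=
  ‖z‖ ^ 2 - ⟪v, z⟫ + k * ∑ i ∈ range k, w i * infDist z (Λ i) ^ 2

section intersectionPenalty

variable {Λ : ℕ → Set E} {w : ℕ → ℝ} {v : E} {k : ℕ} {x : ℕ → E}

theorem continuous_intersectionPenalty : Continuous (intersectionPenalty Λ w v k) := by
  have := fun i => continuous_infDist_pt (Λ i)
  unfold intersectionPenalty
  fun_prop

theorem intersectionPenalty_zero (h0 : ∀ i, (0 : E) ∈ Λ i) :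
    intersectionPenalty Λ w v k 0 = 0 := by
  simp [intersectionPenalty, infDist_zero_of_mem (h0 _)]

theorem norm_sq_sub_inner_le_intersectionPenalty (hw : ∀ i, 0 ≤ w i) (z : E) :
    ‖z‖ ^ 2 - ⟪v, z⟫ ≤ intersectionPenalty Λ w v k z :=
  le_add_of_nonneg_right <|
    mul_nonneg k.cast_nonneg (sum_nonneg fun i _ => mul_nonneg (hw i) (sq_nonneg _))

theorem exists_forall_intersectionPenalty_le [ProperSpace E] (h0 : ∀ i, (0 : E) ∈ Λ i)
    (hw : ∀ i, 0 ≤ w i) :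
    ∃ x, ∀ z, intersectionPenalty Λ w v k x ≤ intersectionPenalty Λ w v k z := by
  refine continuous_intersectionPenalty.exists_forall_le' 0 ?_
  filter_upwards [tendsto_norm_cocompact_atTop.eventually_ge_atTop ‖v‖] with z hz
  have hcoercive : 0 ≤ ‖z‖ ^ 2 - ⟪v, z⟫ := by
    nlinarith [real_inner_le_norm v z, norm_nonneg z]
  rw [intersectionPenalty_zero h0]
  exact hcoercive.trans (norm_sq_sub_inner_le_intersectionPenalty hw z)

theorem norm_sq_le_inner_of_intersectionPenalty_nonpos {z : E} (hw : ∀ i, 0 ≤ w i)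
    (hz : intersectionPenalty Λ w v k z ≤ 0) : ‖z‖ ^ 2 ≤ ⟪v, z⟫ := by
  linarith [norm_sq_sub_inner_le_intersectionPenalty (Λ := Λ) (v := v) (k := k) hw z]

theorem norm_le_of_intersectionPenalty_nonpos {z : E} (hw : ∀ i, 0 ≤ w i)
    (hz : intersectionPenalty Λ w v k z ≤ 0) : ‖z‖ ≤ ‖v‖ := by
  have h := (norm_sq_le_inner_of_intersectionPenalty_nonpos hw hz).trans (real_inner_le_norm v z)
  nlinarith [norm_nonneg z, norm_nonneg v]

theorem mul_infDist_sq_le_of_intersectionPenalty_nonpos {z : E} (hw : ∀ i, 0 ≤ w i)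
    (hz : intersectionPenalty Λ w v k z ≤ 0) {i : ℕ} (hi : i < k) :
    k * (w i * infDist z (Λ i) ^ 2) ≤ ‖v‖ ^ 2 := by
  have hpen : (k : ℝ) * ∑ j ∈ range k, w j * infDist z (Λ j) ^ 2 ≤ ⟪v, z⟫ := by
    unfold intersectionPenalty at hz
    nlinarith [sq_nonneg ‖z‖]
  calc (k : ℝ) * (w i * infDist z (Λ i) ^ 2)
      ≤ k * ∑ j ∈ range k, w j * infDist z (Λ j) ^ 2 := by
        gcongr
        exact single_le_sum (f := fun j => w j * infDist z (Λ j) ^ 2)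
          (fun j _ => mul_nonneg (hw j) (sq_nonneg _)) (mem_range.2 hi)
    _ ≤ ⟪v, z⟫ := hpen
    _ ≤ ‖v‖ * ‖z‖ := real_inner_le_norm v z
    _ ≤ ‖v‖ ^ 2 := by nlinarith [norm_le_of_intersectionPenalty_nonpos hw hz, norm_nonneg v]


theorem tendsto_infDist_sq_of_intersectionPenalty_nonpos (hw : ∀ i, 0 ≤ w i)
    (hx : ∀ k, intersectionPenalty Λ w v k (x k) ≤ 0) {i : ℕ} (hwi : 0 < w i) :
    Tendsto (fun k => infDist (x k) (Λ i) ^ 2) atTop (𝓝 0) := by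
  have hbound : ∀ᶠ k : ℕ in atTop, infDist (x k) (Λ i) ^ 2 ≤ ‖v‖ ^ 2 / w i / k := by
    filter_upwards [eventually_gt_atTop i] with k hk
    have hk' : (0 : ℝ) < k := Nat.cast_pos.2 (by omega)
    have h := mul_infDist_sq_le_of_intersectionPenalty_nonpos hw (hx k) hk
    rw [le_div_iff₀ hk', le_div_iff₀ hwi]
    linarith
  have hlim := tendsto_const_div_atTop_nhds_zero_nat (‖v‖ ^ 2 / w i)
  exact squeeze_zero' (Eventually.of_forall fun k => sq_nonneg _) hbound hlim

theorem tendsto_zero_of_intersectionPenalty_nonpos [ProperSpace E]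
    (hcone : ∀ i, IsConeSet (Λ i)) (hclosed : ∀ i, IsClosed (Λ i)) (h0 : ∀ i, (0 : E) ∈ Λ i)
    (hw : ∀ i, 0 < w i) (hv : v ∈ frechetNormalCone (⋂ i, Λ i) 0)
    (hx : ∀ k, intersectionPenalty Λ w v k (x k) ≤ 0) : Tendsto x atTop (𝓝 0) := by
  have hw' : ∀ i, 0 ≤ w i := fun i => (hw i).le
  have hbounded : ∀ k, x k ∈ closedBall 0 ‖v‖ := fun k =>
    mem_closedBall_zero_iff.2 (norm_le_of_intersectionPenalty_nonpos hw' (hx k))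
  refine (isCompact_closedBall 0 ‖v‖).tendsto_nhds_of_unique_mapClusterPt
    (Eventually.of_forall hbounded) fun y _ hy => ?_
  obtain ⟨ψ, hψ, hxψ⟩ := hy.tendsto_subseq
  have hmem : y ∈ ⋂ i, Λ i := by
    refine Set.mem_iInter.2 fun i => ((hclosed i).mem_iff_infDist_zero ⟨0, h0 i⟩).2 ?_
    have hlim := (((continuous_infDist_pt (Λ i)).tendsto y).comp hxψ).pow 2
    have hzero := (tendsto_infDist_sq_of_intersectionPenalty_nonpos hw' hx (hw i)).comp
      hψ.tendsto_atTop
    exact pow_eq_zero_iff two_ne_zero |>.1 (tendsto_nhds_unique hlim hzero)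
  have hnorm : ‖y‖ ^ 2 ≤ ⟪v, y⟫ :=
    le_of_tendsto_of_tendsto' (((continuous_norm.pow 2).tendsto y).comp hxψ)
      (((continuous_const.inner continuous_id).tendsto y).comp hxψ)
      fun j => norm_sq_le_inner_of_intersectionPenalty_nonpos hw' (hx (ψ j))
  have hpolar := (IsConeSet.iInter hcone).inner_nonpos_of_mem_frechetNormalCone hv hmem
  exact norm_eq_zero.1 (pow_eq_zero_iff two_ne_zero |>.1 (by nlinarith [sq_nonneg ‖y‖]))

theorem eq_of_forall_intersectionPenalty_le (hw : ∀ i, 0 ≤ w i) {X : E} {p : ℕ → E}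
    (hp : ∀ i, p i ∈ Λ i) (hpX : ∀ i, infDist X (Λ i) = dist X (p i))
    (hX : ∀ z, intersectionPenalty Λ w v k X ≤ intersectionPenalty Λ w v k z) :
    v = (2 : ℝ) • X + ∑ i ∈ range k, w i • ((2 * k : ℝ) • (X - p i)) := by
  set q : E → ℝ := fun z => ‖z‖ ^ 2 - ⟪v, z⟫ + k * ∑ i ∈ range k, w i * ‖z - p i‖ ^ 2
  have hq_ge : ∀ z, intersectionPenalty Λ w v k z ≤ q z := fun z => by
    simp only [intersectionPenalty, q]
    gcongr with i
    · exact hw i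
    · exact infDist_nonneg
    · rw [← dist_eq_norm]
      exact infDist_le_dist_of_mem (hp i)
  have hq_eq : intersectionPenalty Λ w v k X = q X := by
    simp only [intersectionPenalty, q, hpX, dist_eq_norm]
  set g := (2 : ℝ) • X + ∑ i ∈ range k, w i • ((2 * k : ℝ) • (X - p i)) - v
  have hsum : ∀ u, (k : ℝ) * ∑ i ∈ range k, w i * ‖X + u - p i‖ ^ 2 =
      k * ∑ i ∈ range k, w i * ‖X - p i‖ ^ 2 + ∑ i ∈ range k, w i * (2 * k * ⟪X - p i, u⟫)
        + k * (∑ i ∈ range k, w i) * ‖u‖ ^ 2 := fun u => by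
    simp only [Finset.mul_sum, Finset.sum_mul, ← Finset.sum_add_distrib]
    refine sum_congr rfl fun i _ => ?_
    rw [norm_add_sub_sq_real]
    ring
  have hinner : ∀ u, ⟪g, u⟫ = 2 * ⟪X, u⟫ + ∑ i ∈ range k, w i * (2 * k * ⟪X - p i, u⟫)
      - ⟪v, u⟫ := fun u => by
    simp only [g, inner_sub_left, inner_add_left, sum_inner, real_inner_smul_left]
  have hexpand : ∀ u, q (X + u) = q X + ⟪g, u⟫ + (1 + k * ∑ i ∈ range k, w i) * ‖u‖ ^ 2 :=
    fun u => by
      simp only [q]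
      rw [hsum, norm_add_sq_real, inner_add_right, hinner]
      ring
  have hg : g = 0 := eq_zero_of_forall_inner_add_mul_norm_sq_nonneg
      (a := 1 + k * ∑ i ∈ range k, w i) fun u => by
    linarith [hexpand u, hq_ge (X + u), hX (X + u)]
  exact (sub_eq_zero.1 hg).symm

end intersectionPenalty

theorem fuzzy_intersection_rule_general (n : ℕ) (Λ : ℕ → Set (EuclideanSpace ℝ (Fin n)))
    (hcone : ∀ i, IsConeSet (Λ i)) (hclosed : ∀ i, IsClosed (Λ i))
    (h0 : ∀ i, (0 : EuclideanSpace ℝ (Fin n)) ∈ Λ i)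
    (v : EuclideanSpace ℝ (Fin n)) (hv : v ∈ frechetNormalCone (⋂ i, Λ i) 0)
    (ε : ℝ) (hε : 0 < ε) :
    ∃ x : ℕ → EuclideanSpace ℝ (Fin n),
      (∀ i, x i ∈ limitingNormalCone (Λ i) 0) ∧
      ∃ s, HasSum (fun i => (1 / 2 ^ (i + 1) : ℝ) • x i) s ∧ ‖v - s‖ ≤ ε := by
  set w : ℕ → ℝ := fun i => 1 / 2 ^ (i + 1)
  have hw : ∀ i, 0 < w i := fun i => by positivity
  choose x hx using fun k =>
    exists_forall_intersectionPenalty_le (v := v) (k := k) h0 fun i => (hw i).le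
  have hx_nonpos : ∀ k, intersectionPenalty Λ w v k (x k) ≤ 0 := fun k =>
    (hx k 0).trans (intersectionPenalty_zero h0).le
  obtain ⟨k, hk⟩ := ((tendsto_zero_of_intersectionPenalty_nonpos hcone hclosed h0 hw hv
    hx_nonpos).eventually (ball_mem_nhds 0 (half_pos hε))).exists
  choose p hp hpx using fun i => (hclosed i).exists_infDist_eq_dist ⟨0, h0 i⟩ (x k)
  set c : ℕ → ℝ := fun i => if i < k then 2 * k else 0
  refine ⟨fun i => c i • (x k - p i), fun i => ?_, v - (2 : ℝ) • x k, ?_, ?_⟩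
  · have hc : 0 ≤ c i := by simp only [c]; split_ifs <;> positivity
    exact (hcone i).mem_limitingNormalCone_zero (hp i)
      (mem_frechetNormalCone_smul_sub_of_forall_dist_le
        (fun z hz => hpx i ▸ infDist_le_dist_of_mem hz) hc)
  · have hfinite : HasSum (fun i => w i • c i • (x k - p i))
        (∑ i ∈ range k, w i • c i • (x k - p i)) :=
      hasSum_sum_of_ne_finset_zero fun i hi => by simp [c, not_lt.1 (mt mem_range.2 hi)]
    convert hfinite using 1
    rw [eq_of_forall_intersectionPenalty_le (fun i => (hw i).le) hp hpx (hx k),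
      add_sub_cancel_left]
    exact sum_congr rfl fun i hi => by simp [c, mem_range.1 hi]
  · rw [sub_sub_cancel, norm_smul, Real.norm_two]
    linarith [mem_ball_zero_iff.1 hk]

/-- fuzzy intersection rule for Fréchet normals to countable
intersections of cones. -/
theorem fuzzy_intersection_rule (n : ℕ) (Λ : ℕ → Set (EuclideanSpace ℝ (Fin n)))
    (hcone : ∀ i, IsConeSet (Λ i)) (hclosed : ∀ i, IsClosed (Λ i))
    (h0 : ∀ i, (0 : EuclideanSpace ℝ (Fin n)) ∈ Λ i)
    (hqc : NormalQualification n Λ)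
    (v : EuclideanSpace ℝ (Fin n)) (hv : v ∈ frechetNormalCone (⋂ i, Λ i) 0)
    (ε : ℝ) (hε : 0 < ε) :
    ∃ x : ℕ → EuclideanSpace ℝ (Fin n),
      (∀ i, x i ∈ limitingNormalCone (Λ i) 0) ∧
      ∃ s, HasSum (fun i => (1 / 2 ^ (i + 1) : ℝ) • x i) s ∧ ‖v - s‖ ≤ ε :=
  fuzzy_intersection_rule_general n Λ hcone hclosed h0 v hv ε hε
end

section
/- Let {Λ_i}_{i∈ℕ} be a countable system of closed cones in ℝⁿ satisfying the normal qualification condition. Then for every x* ∈ N̂(0; ⋂_{i=1}^∞ Λ_i) with ⟨x*,x⟩ < 0 for all x ∈ ⋂_{i=1}^∞ Λ_i \ {0}, there exist x*_i ∈ N(0;Λ_i) such that x* = Σ_{i=1}^∞ 2^{-i} x*_i. -/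
open Filter Topology

variable {E : Type*} [NormedAddCommGroup E] [InnerProductSpace ℝ E]

/-!
Put `g x = ∑ wᵢ dist(x, Λᵢ)²`. Since `v` is strictly negative on `⋂ Λᵢ \ {0}`, compactness of the
unit vectors of the half-space `0 ≤ ⟪v, x⟫` gives `m ‖x‖² ≤ g x` there, for some `m > 0`.
For `ρ > ‖v‖ / m` the function `ρ g - ⟪v, ·⟫` attains its minimum over the unit ball at a point
`x` with `‖x‖ ≤ ‖v‖ / (m ρ)`, hence in the interior. With `zᵢ` a nearest point of `Λᵢ` to `x`, the
first-order condition reads `v = ∑ wᵢ yᵢ` for the proximal normals `yᵢ = 2ρ (x - zᵢ)` to `Λᵢ` at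
`zᵢ`, and `wᵢ ‖yᵢ‖² ≤ 4 ‖v‖² / m` uniformly in `ρ`. Letting `ρ → ∞` along a subsequence on
which every `yᵢ` converges, `zᵢ → 0`, the limits are limiting normals, and dominated convergence
(with dominating series `∑ √wᵢ`) passes the representation to the limit.
-/

open Metric InnerProductSpace RealInnerProductSpace Pointwise

lemma IsConeSet.smul_set_eq {Λ : Set E} (hΛ : IsConeSet Λ) {t : ℝ} (ht : 0 < t) :
    t • Λ = Λ := by
  refine (Set.smul_set_subset_iff.mpr fun x hx => hΛ t ht.le x hx).antisymm fun x hx => ?_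
  exact ⟨t⁻¹ • x, hΛ _ (inv_nonneg.mpr ht.le) x hx, smul_inv_smul₀ ht.ne' x⟩

lemma IsConeSet.infDist_smul {Λ : Set E} (hΛ : IsConeSet Λ) {t : ℝ} (ht : 0 < t) (x : E) :
    infDist (t • x) Λ = t * infDist x Λ := by
  conv_lhs => rw [← hΛ.smul_set_eq ht]
  rw [infDist_smul₀ ht.ne', Real.norm_of_nonneg ht.le]

lemma mem_limitingNormalCone_of_tendsto {Ω : Set E} {x₀ u : E} {x y : ℕ → E}
    (hx : ∀ k, x k ∈ Ω) (hx₀ : Tendsto x atTop (𝓝 x₀))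
    (hy : ∀ k, y k ∈ frechetNormalCone Ω (x k)) (hu : Tendsto y atTop (𝓝 u)) :
    u ∈ limitingNormalCone Ω x₀ :=
  ⟨fun _ => 0, x, y, fun _ => le_rfl, tendsto_const_nhds, hx, hx₀, hu, hy⟩

lemma smul_sub_mem_frechetNormalCone_of_nearest {Λ : Set E} {p q : E}
    (hq : ∀ z ∈ Λ, ‖p - q‖ ≤ ‖p - z‖) {c : ℝ} (hc : 0 ≤ c) :
    c • (p - q) ∈ frechetNormalCone Λ q := by
  intro η hη
  refine ⟨2 * η / (c + 1), by positivity, fun z hz hzq => ?_⟩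
  have hinner : ⟪p - q, z - q⟫ ≤ ‖z - q‖ ^ 2 / 2 := by
    have h := pow_le_pow_left₀ (norm_nonneg _) (hq z hz) 2
    rw [show p - z = (p - q) - (z - q) by abel, norm_sub_sq_real (p - q)] at h
    linarith
  have hcz : c * ‖z - q‖ ≤ 2 * η := by
    rw [lt_div_iff₀ (by positivity)] at hzq
    nlinarith [norm_nonneg (z - q)]
  rw [real_inner_smul_left, zero_add]
  nlinarith [mul_le_mul_of_nonneg_left hinner hc, norm_nonneg (z - q)]

lemma hasSum_mul_norm_sub_sq {w : ℕ → ℝ} (hw : HasSum w 1) {z : ℕ → E} {s : E}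
    (hs : HasSum (fun i => w i • z i) s) {c : ℝ} (hc : HasSum (fun i => w i * ‖z i‖ ^ 2) c)
    (x : E) : HasSum (fun i => w i * ‖x - z i‖ ^ 2) (‖x - s‖ ^ 2 + (c - ‖s‖ ^ 2)) := by
  have h := ((hw.mul_right (‖x‖ ^ 2)).sub (((innerSL ℝ x).hasSum hs).mul_left 2)).add hc
  simp only [innerSL_apply_apply, real_inner_smul_right, one_mul] at h
  rw [show ‖x - s‖ ^ 2 + (c - ‖s‖ ^ 2) = ‖x‖ ^ 2 - 2 * ⟪x, s⟫ + c by
    rw [norm_sub_sq_real]; ring]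
  exact h.congr_fun fun i => by rw [norm_sub_sq_real]; ring

lemma two_mul_smul_sub_eq_of_isLocalMin {r c : ℝ} {s v x : E}
    (h : IsLocalMin (fun y => r * (‖y - s‖ ^ 2 + c) - ⟪v, y⟫) x) :
    (2 * r) • (x - s) = v := by
  have hderiv : HasFDerivAt (fun y => r * (‖y - s‖ ^ 2 + c) - ⟪v, y⟫)
      (innerSL ℝ ((2 * r) • (x - s) - v)) x := by
    have := ((((hasFDerivAt_id x).sub_const s).norm_sq.add_const c).const_mul r).sub
      (innerSL ℝ v).hasFDerivAt
    refine this.congr_fderiv ?_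
    ext u
    simp [mul_assoc, mul_left_comm r 2]
  have h0 := DFunLike.congr_fun (h.hasFDerivAt_eq_zero hderiv) ((2 * r) • (x - s) - v)
  rw [innerSL_apply_apply, zero_apply, inner_self_eq_zero] at h0
  exact sub_eq_zero.mp h0

lemma exists_strictMono_tendsto_of_norm_le {F : Type*} [NormedAddCommGroup F] [ProperSpace F]
    (y : ℕ → ℕ → F) (R : ℕ → ℝ) (hy : ∀ k i, ‖y k i‖ ≤ R i) :
    ∃ (φ : ℕ → ℕ) (x : ℕ → F), StrictMono φ ∧
      ∀ i, Tendsto (fun k => y (φ k) i) atTop (𝓝 (x i)) := by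
  obtain ⟨x, -, φ, hφ, hx⟩ := (isCompact_univ_pi fun i =>
    isCompact_closedBall (0 : F) (R i)).tendsto_subseq fun k =>
      Set.mem_univ_pi.mpr fun i => mem_closedBall_zero_iff.mpr (hy k i)
  exact ⟨φ, x, hφ, tendsto_pi_nhds.mp hx⟩

lemma HasSum.of_tendsto_of_dominated {α β G : Type*} [NormedAddCommGroup G] [CompleteSpace G]
    {l : Filter α} [l.NeBot] {f : α → β → G} {g : β → G} {b : β → ℝ} {a : G}
    (hf : ∀ k, HasSum (f k) a) (hb : Summable b) (hfb : ∀ k i, ‖f k i‖ ≤ b i)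
    (hfg : ∀ i, Tendsto (fun k => f k i) l (𝓝 (g i))) : HasSum g a := by
  have hg : Summable g := hb.of_norm_bounded fun i =>
    le_of_tendsto (hfg i).norm (Eventually.of_forall fun k => hfb k i)
  have h := tendsto_tsum_of_dominated_convergence hb hfg (Eventually.of_forall hfb)
  simp only [fun k => (hf k).tsum_eq] at h
  exact tendsto_nhds_unique tendsto_const_nhds h ▸ hg.hasSum

lemma norm_smul_le_sqrt_mul_sqrt {F : Type*} [NormedAddCommGroup F] [NormedSpace ℝ F] {a B : ℝ}
    {y : F} (ha : 0 ≤ a) (h : a * ‖y‖ ^ 2 ≤ B) : ‖a • y‖ ≤ √B * √a := by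
  rw [← Real.sqrt_mul' B ha]
  refine Real.le_sqrt_of_sq_le ?_
  rw [norm_smul, Real.norm_of_nonneg ha]
  nlinarith

section weightedSqInfDist

variable {F : Type*} [NormedAddCommGroup F] {w : ℕ → ℝ} {Λ : ℕ → Set F}

variable (w Λ) in
noncomputable def weightedSqInfDist (x : F) : ℝ :=
  ∑' i, w i * infDist x (Λ i) ^ 2

lemma summable_mul_infDist_sq (hw0 : ∀ i, 0 ≤ w i) (hw : Summable w)
    (h0 : ∀ i, (0 : F) ∈ Λ i) (x : F) : Summable fun i => w i * infDist x (Λ i) ^ 2 := by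
  refine (hw.mul_right (‖x‖ ^ 2)).of_nonneg_of_le
    (fun i => mul_nonneg (hw0 i) (sq_nonneg _)) fun i => ?_
  have hd : infDist x (Λ i) ≤ ‖x‖ := by
    simpa using infDist_le_dist_of_mem (x := x) (h0 i)
  exact mul_le_mul_of_nonneg_left (pow_le_pow_left₀ infDist_nonneg hd 2) (hw0 i)

lemma weightedSqInfDist_nonneg (hw0 : ∀ i, 0 ≤ w i) (x : F) : 0 ≤ weightedSqInfDist w Λ x :=
  tsum_nonneg fun i => mul_nonneg (hw0 i) (sq_nonneg _)

lemma weightedSqInfDist_zero (h0 : ∀ i, (0 : F) ∈ Λ i) : weightedSqInfDist w Λ 0 = 0 := by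
  simp [weightedSqInfDist, infDist_zero_of_mem (h0 _)]

lemma mul_infDist_sq_le_weightedSqInfDist (hw0 : ∀ i, 0 ≤ w i) (hw : Summable w)
    (h0 : ∀ i, (0 : F) ∈ Λ i) (x : F) (i : ℕ) :
    w i * infDist x (Λ i) ^ 2 ≤ weightedSqInfDist w Λ x :=
  (summable_mul_infDist_sq hw0 hw h0 x).le_tsum i fun j _ => mul_nonneg (hw0 j) (sq_nonneg _)

lemma continuousOn_weightedSqInfDist (hw0 : ∀ i, 0 ≤ w i) (hw : Summable w)
    (h0 : ∀ i, (0 : F) ∈ Λ i) (r : ℝ) :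
    ContinuousOn (weightedSqInfDist w Λ) (closedBall 0 r) := by
  refine continuousOn_tsum (fun i => (continuous_const.mul
    ((continuous_infDist_pt _).pow 2)).continuousOn) (hw.mul_right (r ^ 2)) fun i x hx => ?_
  have hd : infDist x (Λ i) ≤ r := by
    simpa using (infDist_le_dist_of_mem (x := x) (h0 i)).trans (mem_closedBall.mp hx)
  rw [Real.norm_of_nonneg (mul_nonneg (hw0 i) (sq_nonneg _))]
  exact mul_le_mul_of_nonneg_left (pow_le_pow_left₀ infDist_nonneg hd 2) (hw0 i)

lemma mem_of_weightedSqInfDist_eq_zero (hw0 : ∀ i, 0 < w i) (hw : Summable w)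
    (hclosed : ∀ i, IsClosed (Λ i)) (h0 : ∀ i, (0 : F) ∈ Λ i) {x : F}
    (hx : weightedSqInfDist w Λ x = 0) (i : ℕ) : x ∈ Λ i := by
  have h := mul_infDist_sq_le_weightedSqInfDist (fun j => (hw0 j).le) hw h0 x i
  rw [hx] at h
  have hd : infDist x (Λ i) ^ 2 ≤ 0 := le_of_mul_le_mul_left (by simpa using h) (hw0 i)
  replace hd : infDist x (Λ i) = 0 := by nlinarith [infDist_nonneg (x := x) (s := Λ i)]
  exact ((hclosed i).mem_iff_infDist_zero ⟨0, h0 i⟩).mpr hd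

lemma norm_le_two_mul_of_norm_sub_eq_infDist {Λ : Set F} {x z : F} (h0 : (0 : F) ∈ Λ)
    (hz : ‖x - z‖ = infDist x Λ) : ‖z‖ ≤ 2 * ‖x‖ := by
  have hxz : ‖x - z‖ ≤ ‖x‖ := by simpa [hz] using infDist_le_dist_of_mem (x := x) h0
  linarith [norm_le_norm_add_norm_sub' z x, norm_sub_rev z x]

end weightedSqInfDist

lemma weightedSqInfDist_smul {w : ℕ → ℝ} {Λ : ℕ → Set E} (hcone : ∀ i, IsConeSet (Λ i))
    {t : ℝ} (ht : 0 < t) (x : E) :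
    weightedSqInfDist w Λ (t • x) = t ^ 2 * weightedSqInfDist w Λ x := by
  simp only [weightedSqInfDist, (hcone _).infDist_smul ht, ← tsum_mul_left]
  exact tsum_congr fun i => by ring

section Representation

variable [ProperSpace E] {w : ℕ → ℝ} {Λ : ℕ → Set E} {v : E}

lemma exists_pos_mul_norm_sq_le_weightedSqInfDist (hw0 : ∀ i, 0 < w i) (hw : Summable w)
    (hcone : ∀ i, IsConeSet (Λ i)) (hclosed : ∀ i, IsClosed (Λ i)) (h0 : ∀ i, (0 : E) ∈ Λ i)
    (hneg : ∀ x ∈ (⋂ i, Λ i) \ {0}, ⟪v, x⟫ < 0) :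
    ∃ m > 0, ∀ x, 0 ≤ ⟪v, x⟫ → m * ‖x‖ ^ 2 ≤ weightedSqInfDist w Λ x := by
  set K := sphere (0 : E) 1 ∩ {x | 0 ≤ ⟪v, x⟫}
  have hK : IsCompact K :=
    (isCompact_sphere 0 1).inter_right (isClosed_le continuous_const (continuous_const.inner
      continuous_id))
  have hpos : ∀ x ∈ K, 0 < weightedSqInfDist w Λ x := by
    rintro x ⟨hx1, hxv⟩
    refine (weightedSqInfDist_nonneg (fun i => (hw0 i).le) x).lt_of_ne' fun hx => ?_
    have hmem := Set.mem_iInter.mpr (mem_of_weightedSqInfDist_eq_zero hw0 hw hclosed h0 hx)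
    have hx0 : x ≠ 0 := ne_zero_of_mem_unit_sphere ⟨x, hx1⟩
    exact (hneg x ⟨hmem, hx0⟩).not_ge hxv
  obtain ⟨m, hm, hmK⟩ := hK.exists_forall_le' ((continuousOn_weightedSqInfDist
    (fun i => (hw0 i).le) hw h0 1).mono fun x hx => sphere_subset_closedBall hx.1) hpos
  refine ⟨m, hm, fun x hxv => ?_⟩
  rcases eq_or_ne x 0 with rfl | hx0
  · simp [weightedSqInfDist_zero h0]
  have hxn : 0 < ‖x‖ := norm_pos_iff.mpr hx0
  have hu : ‖x‖⁻¹ • x ∈ K := by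
    refine ⟨?_, ?_⟩
    · simp [norm_smul, hxn.ne']
    · show 0 ≤ ⟪v, ‖x‖⁻¹ • x⟫
      rw [real_inner_smul_right]
      exact mul_nonneg (inv_nonneg.mpr hxn.le) hxv
  have h := hmK _ hu
  rw [weightedSqInfDist_smul hcone (inv_pos.mpr hxn)] at h
  rwa [inv_pow, inv_mul_eq_div, le_div_iff₀ (by positivity)] at h

lemma exists_isLocalMin_penalized (hw0 : ∀ i, 0 ≤ w i) (hw : Summable w)
    (h0 : ∀ i, (0 : E) ∈ Λ i) {m : ℝ}
    (hm : ∀ x, 0 ≤ ⟪v, x⟫ → m * ‖x‖ ^ 2 ≤ weightedSqInfDist w Λ x)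
    {ρ : ℝ} (hρ : 0 < ρ) (hρv : ‖v‖ < m * ρ) :
    ∃ x, IsLocalMin (fun y => ρ * weightedSqInfDist w Λ y - ⟪v, y⟫) x ∧
      m * ρ * ‖x‖ ≤ ‖v‖ ∧ m * ρ ^ 2 * weightedSqInfDist w Λ x ≤ ‖v‖ ^ 2 := by
  set g := weightedSqInfDist w Λ
  have hcont : ContinuousOn (fun y => ρ * g y - ⟪v, y⟫) (closedBall 0 1) :=
    (continuousOn_const.mul (continuousOn_weightedSqInfDist hw0 hw h0 1)).sub
      (continuous_const.inner continuous_id).continuousOn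
  obtain ⟨x, -, hmin⟩ := (isCompact_closedBall (0 : E) 1).exists_isMinOn
    (nonempty_closedBall.mpr zero_le_one) hcont
  have hx0 : ρ * g x ≤ ⟪v, x⟫ := by
    have h : ρ * g x - ⟪v, x⟫ ≤ ρ * g 0 - ⟪v, 0⟫ := hmin (mem_closedBall_self zero_le_one)
    rw [show g 0 = 0 from weightedSqInfDist_zero h0, inner_zero_right] at h
    linarith
  have hgx : 0 ≤ g x := weightedSqInfDist_nonneg hw0 x
  have hvx : ⟪v, x⟫ ≤ ‖v‖ * ‖x‖ := real_inner_le_norm v x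
  have hmx := hm x ((mul_nonneg hρ.le hgx).trans hx0)
  have hmρx : m * ρ * ‖x‖ ≤ ‖v‖ := by
    rcases (norm_nonneg x).eq_or_lt with hx | hx
    · rw [← hx, mul_zero]; exact norm_nonneg v
    · nlinarith [mul_le_mul_of_nonneg_left hmx hρ.le]
  refine ⟨x, hmin.isLocalMin (closedBall_mem_nhds_of_mem ?_), hmρx, ?_⟩
  · rw [mem_ball_zero_iff]
    nlinarith [norm_nonneg x, norm_nonneg v]
  · have hmρ : 0 ≤ m * ρ := (norm_nonneg v).trans hρv.le
    calc m * ρ ^ 2 * g x = m * ρ * (ρ * g x) := by ring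
      _ ≤ m * ρ * (‖v‖ * ‖x‖) := mul_le_mul_of_nonneg_left (hx0.trans hvx) hmρ
      _ = ‖v‖ * (m * ρ * ‖x‖) := by ring
      _ ≤ ‖v‖ ^ 2 := by nlinarith [norm_nonneg v]

/-- `∑ wᵢ ‖y - zᵢ‖²` majorizes the weighted distance and touches it at `x`, so `x` is also a
local minimizer of the penalized majorant, a quadratic whose critical point is explicit. -/
lemma hasSum_smul_of_isLocalMin_penalized (hw : HasSum w 1) (hw0 : ∀ i, 0 ≤ w i)
    (h0 : ∀ i, (0 : E) ∈ Λ i) {ρ : ℝ} (hρ : 0 ≤ ρ) {x : E}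
    (hmin : IsLocalMin (fun y => ρ * weightedSqInfDist w Λ y - ⟪v, y⟫) x) {z : ℕ → E}
    (hz : ∀ i, z i ∈ Λ i) (hzx : ∀ i, ‖x - z i‖ = infDist x (Λ i)) :
    HasSum (fun i => w i • ((2 * ρ) • (x - z i))) v := by
  have hzn i : ‖z i‖ ≤ 2 * ‖x‖ := norm_le_two_mul_of_norm_sub_eq_infDist (h0 i) (hzx i)
  have hs : Summable fun i => w i • z i :=
    (hw.summable.mul_right (2 * ‖x‖)).of_norm_bounded fun i => by
      rw [norm_smul, Real.norm_of_nonneg (hw0 i)]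
      exact mul_le_mul_of_nonneg_left (hzn i) (hw0 i)
  have hc : Summable fun i => w i * ‖z i‖ ^ 2 :=
    (hw.summable.mul_right ((2 * ‖x‖) ^ 2)).of_nonneg_of_le
      (fun i => mul_nonneg (hw0 i) (sq_nonneg _))
      fun i => mul_le_mul_of_nonneg_left (pow_le_pow_left₀ (norm_nonneg _) (hzn i) 2) (hw0 i)
  set s := ∑' i, w i • z i
  set c := ∑' i, w i * ‖z i‖ ^ 2
  have hQ := hasSum_mul_norm_sub_sq hw hs.hasSum hc.hasSum
  have hmaj : IsLocalMin (fun y => ρ * (‖y - s‖ ^ 2 + (c - ‖s‖ ^ 2)) - ⟪v, y⟫) x := by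
    have hle : ∀ y, weightedSqInfDist w Λ y ≤ ‖y - s‖ ^ 2 + (c - ‖s‖ ^ 2) := fun y =>
      hasSum_le (fun i => mul_le_mul_of_nonneg_left (pow_le_pow_left₀ infDist_nonneg
          (by simpa [dist_eq_norm] using infDist_le_dist_of_mem (x := y) (hz i)) 2) (hw0 i))
        (summable_mul_infDist_sq hw0 hw.summable h0 y).hasSum (hQ y)
    have heq : weightedSqInfDist w Λ x = ‖x - s‖ ^ 2 + (c - ‖s‖ ^ 2) :=
      (tsum_congr fun i => by rw [hzx i]).trans (hQ x).tsum_eq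
    filter_upwards [hmin] with y hy
    rw [← heq]
    nlinarith [mul_le_mul_of_nonneg_left (hle y) hρ]
  rw [← two_mul_smul_sub_eq_of_isLocalMin hmaj]
  have h := (((one_smul ℝ x) ▸ hw.smul_const x).sub hs.hasSum).const_smul (2 * ρ)
  exact h.congr_fun fun i => by rw [smul_comm, smul_sub]

lemma exists_frechetNormal_hasSum_smul (hw : HasSum w 1) (hw0 : ∀ i, 0 ≤ w i)
    (hclosed : ∀ i, IsClosed (Λ i)) (h0 : ∀ i, (0 : E) ∈ Λ i) {m : ℝ}
    (hm : ∀ x, 0 ≤ ⟪v, x⟫ → m * ‖x‖ ^ 2 ≤ weightedSqInfDist w Λ x)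
    {ρ : ℝ} (hρ : 0 < ρ) (hρv : ‖v‖ < m * ρ) :
    ∃ y z : ℕ → E, (∀ i, z i ∈ Λ i) ∧ (∀ i, ‖z i‖ ≤ 2 * ‖v‖ / (m * ρ)) ∧
      (∀ i, y i ∈ frechetNormalCone (Λ i) (z i)) ∧ (∀ i, w i * ‖y i‖ ^ 2 ≤ 4 * ‖v‖ ^ 2 / m) ∧
      HasSum (fun i => w i • y i) v := by
  obtain ⟨x, hmin, hxv, hgx⟩ := exists_isLocalMin_penalized hw0 hw.summable h0 hm hρ hρv
  choose z hz hzx using fun i => (hclosed i).exists_infDist_eq_dist ⟨0, h0 i⟩ x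
  have hzx' i : ‖x - z i‖ = infDist x (Λ i) := by rw [hzx, dist_eq_norm]
  have hmρ : 0 < m * ρ := (norm_nonneg v).trans_lt hρv
  have hm0 : 0 < m := pos_of_mul_pos_left hmρ hρ.le
  refine ⟨fun i => (2 * ρ) • (x - z i), z, hz, fun i => ?_, fun i => ?_, fun i => ?_,
    hasSum_smul_of_isLocalMin_penalized hw hw0 h0 hρ.le hmin hz hzx'⟩
  · rw [le_div_iff₀ hmρ]
    nlinarith [norm_le_two_mul_of_norm_sub_eq_infDist (h0 i) (hzx' i)]
  · refine smul_sub_mem_frechetNormalCone_of_nearest (fun u hu => ?_) (by positivity)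
    simpa [hzx' i, dist_eq_norm] using infDist_le_dist_of_mem (x := x) hu
  · have hi := mul_infDist_sq_le_weightedSqInfDist hw0 hw.summable h0 x i
    rw [le_div_iff₀ hm0, norm_smul, Real.norm_of_nonneg (by positivity), hzx' i]
    nlinarith [mul_le_mul_of_nonneg_left hi (by positivity : (0 : ℝ) ≤ 4 * m * ρ ^ 2)]

theorem exists_mem_limitingNormalCone_hasSum_smul (hw : HasSum w 1) (hw0 : ∀ i, 0 < w i)
    (hw_sqrt : Summable fun i => √(w i)) (hcone : ∀ i, IsConeSet (Λ i))
    (hclosed : ∀ i, IsClosed (Λ i)) (h0 : ∀ i, (0 : E) ∈ Λ i)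
    (hneg : ∀ x ∈ (⋂ i, Λ i) \ {0}, ⟪v, x⟫ < 0) :
    ∃ x : ℕ → E, (∀ i, x i ∈ limitingNormalCone (Λ i) 0) ∧ HasSum (fun i => w i • x i) v := by
  obtain ⟨m, hm, hmv⟩ :=
    exists_pos_mul_norm_sq_le_weightedSqInfDist hw0 hw.summable hcone hclosed h0 hneg
  have hρ (k : ℕ) : 0 < (‖v‖ + k + 1) / m := by positivity
  have hmρ (k : ℕ) : m * ((‖v‖ + k + 1) / m) = ‖v‖ + k + 1 := mul_div_cancel₀ _ hm.ne'
  choose y z hz hzv hy hyw hsum using fun k : ℕ => exists_frechetNormal_hasSum_smul hw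
    (fun i => (hw0 i).le) hclosed h0 hmv (hρ k) (by rw [hmρ]; linarith)
  set C := √(4 * ‖v‖ ^ 2 / m)
  have hwy k i : ‖w i • y k i‖ ≤ C * √(w i) := norm_smul_le_sqrt_mul_sqrt (hw0 i).le (hyw k i)
  have hyC k i : ‖y k i‖ ≤ C * √(w i) / w i := by
    have h := hwy k i
    rw [norm_smul, Real.norm_of_nonneg (hw0 i).le] at h
    rw [le_div_iff₀ (hw0 i)]
    linarith
  obtain ⟨φ, x, hφ, hx⟩ := exists_strictMono_tendsto_of_norm_le y _ hyC
  have hz0 i : Tendsto (fun k => z k i) atTop (𝓝 0) := by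
    refine squeeze_zero_norm (fun k => hzv k i) ?_
    simp only [hmρ]
    exact tendsto_const_nhds.div_atTop (tendsto_atTop_mono
      (fun k => by linarith [norm_nonneg v]) tendsto_natCast_atTop_atTop)
  refine ⟨x, fun i => mem_limitingNormalCone_of_tendsto (fun k => hz _ i)
    ((hz0 i).comp hφ.tendsto_atTop) (fun k => hy _ i) (hx i), ?_⟩
  exact .of_tendsto_of_dominated (fun k => hsum (φ k)) (hw_sqrt.mul_left C)
    (fun k i => hwy _ i) fun i => (hx i).const_smul (w i)

end Representation

theorem refined_representation_general (n : ℕ) (Λ : ℕ → Set (EuclideanSpace ℝ (Fin n)))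
    (hcone : ∀ i, IsConeSet (Λ i)) (hclosed : ∀ i, IsClosed (Λ i))
    (h0 : ∀ i, (0 : EuclideanSpace ℝ (Fin n)) ∈ Λ i)
    (v : EuclideanSpace ℝ (Fin n))
    (hneg : ∀ x ∈ (⋂ i, Λ i) \ {0}, (inner ℝ v x : ℝ) < 0) :
    ∃ x : ℕ → EuclideanSpace ℝ (Fin n),
      (∀ i, x i ∈ limitingNormalCone (Λ i) 0) ∧
      HasSum (fun i => (1 / 2 ^ (i + 1) : ℝ) • x i) v := by
  have hw : HasSum (fun i : ℕ => (1 / 2 ^ (i + 1) : ℝ)) 1 :=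
    (hasSum_geometric_two' 1).congr_fun fun i => by rw [pow_succ, div_div, mul_comm]
  have hw_sqrt : Summable fun i : ℕ => √(1 / 2 ^ (i + 1) : ℝ) := by
    refine ((summable_nat_add_iff 1).mpr (summable_geometric_of_lt_one (by positivity)
      (inv_lt_one_of_one_lt₀ Real.one_lt_sqrt_two))).congr fun i => ?_
    rw [show (1 / 2 ^ (i + 1) : ℝ) = ((√2)⁻¹ ^ (i + 1)) ^ 2 by
      rw [← pow_mul, mul_comm, pow_mul, inv_pow, Real.sq_sqrt zero_le_two, inv_pow, one_div],
      Real.sqrt_sq (by positivity)]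
  exact exists_mem_limitingNormalCone_hasSum_smul hw (fun i => by positivity) hw_sqrt hcone
    hclosed h0 hneg

/-- refined representation of Fréchet normals to countable
intersections of cones. -/
theorem refined_representation (n : ℕ) (Λ : ℕ → Set (EuclideanSpace ℝ (Fin n)))
    (hcone : ∀ i, IsConeSet (Λ i)) (hclosed : ∀ i, IsClosed (Λ i))
    (h0 : ∀ i, (0 : EuclideanSpace ℝ (Fin n)) ∈ Λ i)
    (hqc : NormalQualification n Λ)
    (v : EuclideanSpace ℝ (Fin n)) (hv : v ∈ frechetNormalCone (⋂ i, Λ i) 0)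
    (hneg : ∀ x ∈ (⋂ i, Λ i) \ {0}, (inner ℝ v x : ℝ) < 0) :
    ∃ x : ℕ → EuclideanSpace ℝ (Fin n),
      (∀ i, x i ∈ limitingNormalCone (Λ i) 0) ∧
      HasSum (fun i => (1 / 2 ^ (i + 1) : ℝ) • x i) v :=
  refined_representation_general n Λ hcone hclosed h0 v hneg
end
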